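/- arXiv:1906.08216 — 2 statements merged into one kernel-verified Lean document; each statement's English description precedes it below -/
import Mathlib

section
/- Let m, n be positive integers with gcd(m,n)=1 and let α be a weak composition of m into n parts. For 1 ≤ r ≤ n define z_r := Σ_{j=1}^n j·α_{j+r}, indices taken modulo n. Then z_1, z_2, …, z_n are pairwise distinct modulo n; equivalently, {z_1 mod n, …, z_n mod n} = {0, 1, …, n−1}. -/
open Finset Polynomial

/-- The cells of the skew shape `λ/μ`. -/
def skewCells (lam mu : YoungDiagram) : Finset (ℕ × ℕ) :=
  lam.cells \ mu.cells

/-- A semistandard Young tableau of skew shape `λ/μ`: a filling of the cells of `λ/μ`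
with positive integers, weakly increasing along rows and strictly increasing down columns.
Cells outside the shape carry the value `0`. -/
structure SkewSSYT (lam mu : YoungDiagram) where
  entry : ℕ → ℕ → ℕ
  pos' : ∀ i j, (i, j) ∈ skewCells lam mu → 0 < entry i j
  zeros' : ∀ i j, (i, j) ∉ skewCells lam mu → entry i j = 0
  row_weak' : ∀ i j1 j2, j1 < j2 → (i, j1) ∈ skewCells lam mu →
    (i, j2) ∈ skewCells lam mu → entry i j1 ≤ entry i j2
  col_strict' : ∀ i1 i2 j, i1 < i2 → (i1, j) ∈ skewCells lam mu →
    (i2, j) ∈ skewCells lam mu → entry i1 j < entry i2 j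

/-- `w_k(T)`: the number of entries of `T` equal to `k`. -/
def SkewSSYT.wt {lam mu : YoungDiagram} (T : SkewSSYT lam mu) (k : ℕ) : ℕ :=
  ((skewCells lam mu).filter fun c => T.entry c.1 c.2 = k).card

/-- `SSYT(λ/μ, n)`: semistandard skew tableaux of shape `λ/μ` with all entries at most `n`. -/
def SSYTbdd (lam mu : YoungDiagram) (n : ℕ) : Set (SkewSSYT lam mu) :=
  {T | ∀ i j, (i, j) ∈ skewCells lam mu → T.entry i j ≤ n}

/-- `SSYT(λ/μ, α)`: semistandard skew tableaux of shape `λ/μ` with exactly `α i`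
entries equal to `i + 1` for each `i : Fin n` (so content `α`, entries in `{1, …, n}`). -/
def SSYTcontent (lam mu : YoungDiagram) {n : ℕ} (α : Fin n → ℕ) : Set (SkewSSYT lam mu) :=
  {T | (∀ i : Fin n, T.wt ((i : ℕ) + 1) = α i) ∧
    ∀ i j, (i, j) ∈ skewCells lam mu → T.entry i j ≤ n}

/-- The cyclic shift `cyc_r(α)`, with `cyc r α i = α ((i + r) mod n)`. -/
def cyc {n : ℕ} (r : ℕ) (α : Fin n → ℕ) : Fin n → ℕ :=
  fun i => α ⟨((i : ℕ) + r) % n, Nat.mod_lt _ i.pos⟩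

/-- `z_r = Σ_j j ⬝ α_{j+r}` (indices mod `n`): the weighted sum of the shifted composition. -/
def zwt {n : ℕ} (α : Fin n → ℕ) (r : ℕ) : ℕ :=
  ∑ j : Fin n, ((j : ℕ) + 1) * cyc r α j

/-- `Σ_{j=1}^n j ⬝ w_j(T)`. -/
def weightedSum {lam mu : YoungDiagram} (n : ℕ) (T : SkewSSYT lam mu) : ℕ :=
  ∑ j : Fin n, ((j : ℕ) + 1) * T.wt ((j : ℕ) + 1)

/-- The (skew) Schur polynomial `s_{λ/μ}(x_1, …, x_n)` evaluated at `x`. -/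
noncomputable def skewSchurEval (lam mu : YoungDiagram) (n : ℕ) {R : Type*} [CommSemiring R]
    (x : Fin n → R) : R :=
  ∑ᶠ T ∈ SSYTbdd lam mu n, ∏ i : Fin n, x i ^ T.wt ((i : ℕ) + 1)

/-- `n(λ) = Σ_j (j - 1) λ_j`, i.e. the sum of the (0-indexed) row indices of the cells. -/
def nStat (lam : YoungDiagram) : ℕ :=
  ∑ c ∈ lam.cells, c.1

/-! Modulo `n`, the shift `α ↦ cyc r α` lowers the weight of every part by `r`, so
`z_r ≡ Σ_k (k + 1) α_k - r m`. Since `m` is a unit modulo `n`, `r ↦ z_r` is injective modulo `n`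
on the complete residue system `{1, …, n}`. -/

section
open Fin.NatCast

variable {n : ℕ} [NeZero n]

theorem cyc_apply (r : ℕ) (α : Fin n → ℕ) (j : Fin n) : cyc r α j = α (j + (r : Fin n)) := by
  rw [cyc]
  congr 1
  ext
  rw [Fin.val_add, Fin.val_natCast, Nat.add_mod_mod]

theorem natCast_val_add_natCast (j : Fin n) (r : ℕ) :
    (((j + (r : Fin n) : Fin n) : ℕ) : ZMod n) = (j : ℕ) + r := by
  rw [Fin.val_add, Fin.val_natCast, Nat.add_mod_mod, ZMod.natCast_mod, Nat.cast_add]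

theorem natCast_zwt (α : Fin n → ℕ) (r : ℕ) :
    (zwt α r : ZMod n) = ∑ k : Fin n, (((k : ℕ) : ZMod n) + 1) * α k - r * ∑ k, (α k : ZMod n) := by
  have hshift : ∀ j : Fin n, (((j : ℕ) : ZMod n) + 1) * α (j + (r : Fin n))
      = (((j + (r : Fin n) : Fin n) : ℕ) + 1 - r : ZMod n) * α (j + (r : Fin n)) := fun j => by
    rw [natCast_val_add_natCast]; ring
  push_cast [zwt, cyc_apply, hshift]
  calc _ = ∑ k : Fin n, (((k : ℕ) : ZMod n) + 1 - r) * α k :=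
        Equiv.sum_comp (Equiv.addRight (r : Fin n)) fun k => (((k : ℕ) : ZMod n) + 1 - r) * α k
    _ = _ := by simp only [sub_mul, Finset.sum_sub_distrib, Finset.mul_sum]

theorem zwt_modEq_zwt_iff {α : Fin n → ℕ} (h : Nat.Coprime (∑ i, α i) n) {r s : ℕ} :
    zwt α r ≡ zwt α s [MOD n] ↔ r ≡ s [MOD n] := by
  have hunit : IsUnit (∑ i, (α i : ZMod n)) := by
    simpa using (ZMod.isUnit_iff_coprime _ n).mpr h
  rw [← ZMod.natCast_eq_natCast_iff, ← ZMod.natCast_eq_natCast_iff, natCast_zwt, natCast_zwt,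
    sub_right_inj, hunit.mul_left_inj]

end

theorem zwt_pairwise_distinct_mod_general (m n : ℕ) (hn : 0 < n)
    (hgcd : Nat.gcd m n = 1) (α : Fin n → ℕ) (hα : ∑ i, α i = m) :
    (∀ r s, 1 ≤ r → r ≤ n → 1 ≤ s → s ≤ n → r ≠ s → zwt α r % n ≠ zwt α s % n) ∧
    (Finset.Icc 1 n).image (fun r => zwt α r % n) = Finset.range n := by
  have : NeZero n := ⟨hn.ne'⟩
  have hmod : Set.InjOn (· % n) (Finset.Icc 1 n) := by
    simpa only [add_comm 1 n, Ico_add_one_right_eq_Icc] using Nat.mod_injOn_Ico 1 n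
  have hinj : Set.InjOn (fun r => zwt α r % n) (Finset.Icc 1 n) :=
    fun r hr s hs h => hmod hr hs ((zwt_modEq_zwt_iff (hα ▸ hgcd)).1 h)
  refine ⟨fun r s hr1 hrn hs1 hsn hne h => hne (hinj ?_ ?_ h), ?_⟩
  · simp [hr1, hrn]
  · simp [hs1, hsn]
  refine eq_of_subset_of_card_le (image_subset_iff.2 fun r _ => mem_range.2 (Nat.mod_lt _ hn)) ?_
  rw [card_image_of_injOn hinj, card_range, Nat.card_Icc, Nat.add_sub_cancel]

/-- If `gcd(m, n) = 1`, the values `z_1, …, z_n` are pairwise distinct modulo `n`;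
equivalently they hit every residue `0, 1, …, n − 1` exactly once. -/
theorem zwt_pairwise_distinct_mod (m n : ℕ) (hm : 0 < m) (hn : 0 < n)
    (hgcd : Nat.gcd m n = 1) (α : Fin n → ℕ) (hα : ∑ i, α i = m) :
    (∀ r s, 1 ≤ r → r ≤ n → 1 ≤ s → s ≤ n → r ≠ s → zwt α r % n ≠ zwt α s % n) ∧
    (Finset.Icc 1 n).image (fun r => zwt α r % n) = Finset.range n :=
  zwt_pairwise_distinct_mod_general m n hn hgcd α hα
end

section
/- Let λ/μ be a skew shape, n a positive integer with gcd(|λ/μ|, n) = 1, and α a weak composition of |λ/μ| into n parts. Let X be the disjoint union X = ⋃_{r=1}^n SSYT(λ/μ, cyc_r(α)) and let f(q) = Σ_{T ∈ X} q^{Σ_{j=1}^n j·w_j(T)}. Then for every primitive n-th root of unity ξ ∈ ℂ and every integer k not divisible by n, f(ξ^k) = 0, and f(1) = |X| = n·|SSYT(λ/μ, α)|. -/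
open Finset Polynomial

/-! All the sets `SSYT(λ/μ, cyc_r α)` have the same size `N`: the Bender–Knuth involution on the
letters `v, v + 1` shows that the number of skew tableaux of content `β` does not change when two
adjacent parts of `β` are swapped, hence under any permutation of `β`. Every tableau of content
`cyc_r α` has weight `z_r = Σ_j j α_{j+r}`, and `z_r + r |λ/μ| ≡ z_0 (mod n)`. As `|λ/μ|` is prime
to `n`, the weights `z_1, …, z_n` are pairwise incongruent mod `n`, so the union `X` is disjoint
and `|X| = n N`, and `f(ξ^k) = N ξ^{k z_0} Σ_{r=1}^n (ξ^{-k |λ/μ|})^r`, a geometric sum that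
vanishes because `ξ^{k |λ/μ|} ≠ 1`. -/

namespace Finset

variable {α : Type*} [LinearOrder α]

theorem card_filter_card_filter_lt_lt (s : Finset α) (b : ℕ) :
    #{x ∈ s | #{y ∈ s | y < x} < b} = min b #s := by
  induction s using Finset.induction_on_max with
  | empty => simp
  | insert a s ha ih =>
    have ha' : a ∉ s := fun h => lt_irrefl a (ha a h)
    have hrank : ∀ x ∈ s, #{y ∈ insert a s | y < x} = #{y ∈ s | y < x} := fun x hx => by
      rw [filter_insert, if_neg (ha x hx).not_gt]
    have hrank_a : #{y ∈ insert a s | y < a} = #s := by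
      rw [filter_insert, if_neg (lt_irrefl a), filter_true_of_mem ha]
    have hs : {x ∈ s | #{y ∈ insert a s | y < x} < b} = {x ∈ s | #{y ∈ s | y < x} < b} :=
      filter_congr fun x hx => by rw [hrank x hx]
    rw [filter_insert, hrank_a, hs, card_insert_of_notMem ha']
    split_ifs with h
    · rw [card_insert_of_notMem fun hm => ha' (mem_filter.mp hm).1, ih]; omega
    · rw [ih]; omega

theorem card_filter_lt_lt_card_filter_iff {s : Finset α} {p : α → Prop} [DecidablePred p]
    (hp : ∀ x ∈ s, ∀ y ∈ s, p x → ¬ p y → x < y) {x : α} (hx : x ∈ s) :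
    #{y ∈ s | y < x} < #{y ∈ s | p y} ↔ p x := by
  constructor
  · intro h
    by_contra hpx
    refine (card_le_card fun y hy => ?_).not_gt h
    rw [mem_filter] at hy ⊢
    exact ⟨hy.1, hp y hy.1 x hx hy.2 hpx⟩
  · intro hpx
    refine card_lt_card ⟨fun y hy => ?_, fun hsub => ?_⟩
    · rw [mem_filter] at hy ⊢
      refine ⟨hy.1, by_contra fun hpy => ?_⟩
      exact lt_asymm hy.2 (hp x hx y hy.1 hpx hpy)
    · exact lt_irrefl x (mem_filter.mp (hsub (mem_filter.mpr ⟨hx, hpx⟩))).2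

end Finset

variable {lam mu : YoungDiagram}

theorem mem_skewCells {p : ℕ × ℕ} : p ∈ skewCells lam mu ↔ p ∈ lam ∧ p ∉ mu := by
  simp [skewCells, YoungDiagram.mem_cells]

theorem mem_skewCells_of_le_of_le {i j i₁ j₁ i₂ j₂ : ℕ} (h₁ : (i₁, j₁) ∈ skewCells lam mu)
    (h₂ : (i₂, j₂) ∈ skewCells lam mu) (hi₁ : i₁ ≤ i) (hi₂ : i ≤ i₂) (hj₁ : j₁ ≤ j)
    (hj₂ : j ≤ j₂) : (i, j) ∈ skewCells lam mu := by
  rw [mem_skewCells] at *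
  exact ⟨lam.up_left_mem hi₂ hj₂ h₂.1, fun h => h₁.2 (mu.up_left_mem hi₁ hj₁ h)⟩

theorem ordConnected_skewCells_row (i : ℕ) :
    Set.OrdConnected {j | (i, j) ∈ skewCells lam mu} :=
  ⟨fun _ h₁ _ h₂ _ hj => mem_skewCells_of_le_of_le h₁ h₂ le_rfl le_rfl hj.1 hj.2⟩

theorem ordConnected_skewCells_col (j : ℕ) :
    Set.OrdConnected {i | (i, j) ∈ skewCells lam mu} :=
  ⟨fun _ h₁ _ h₂ _ hi => mem_skewCells_of_le_of_le h₁ h₂ hi.1 hi.2 le_rfl le_rfl⟩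

namespace SkewSSYT

@[ext] theorem ext {T U : SkewSSYT lam mu} (h : T.entry = U.entry) : T = U := by
  cases T; cases U; simpa using h

theorem row_weak_of_le_succ {e : ℕ → ℕ → ℕ} (h : ∀ i j, (i, j) ∈ skewCells lam mu →
      (i, j + 1) ∈ skewCells lam mu → e i j ≤ e i (j + 1))
    (i j₁ j₂ : ℕ) (hj : j₁ < j₂) (h₁ : (i, j₁) ∈ skewCells lam mu)
    (h₂ : (i, j₂) ∈ skewCells lam mu) : e i j₁ ≤ e i j₂ :=
  monotoneOn_of_le_add_one (ordConnected_skewCells_row i) (fun j _ hj hj' => h i j hj hj')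
    h₁ h₂ hj.le

theorem col_strict_of_lt_succ {e : ℕ → ℕ → ℕ} (h : ∀ i j, (i, j) ∈ skewCells lam mu →
      (i + 1, j) ∈ skewCells lam mu → e i j < e (i + 1) j)
    (i₁ i₂ j : ℕ) (hi : i₁ < i₂) (h₁ : (i₁, j) ∈ skewCells lam mu)
    (h₂ : (i₂, j) ∈ skewCells lam mu) : e i₁ j < e i₂ j :=
  strictMonoOn_of_lt_add_one (ordConnected_skewCells_col j)
    (fun i _ hi hi' => h i j hi hi') h₁ h₂ hi

end SkewSSYT

namespace SkewSSYT

variable (T : SkewSSYT lam mu) (v : ℕ)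

/- The Bender–Knuth involution for the letters `v, v + 1`. A cell is free when it holds `v` or
`v + 1` and is not half of a vertical pair `v` over `v + 1`. The free cells of a row hold `a`
letters `v` followed by `b` letters `v + 1`; they are refilled with `b` letters `v` followed by
`a` letters `v + 1`, a free cell being placed by the rank of its column among the free columns. -/

def IsPairedAt (r c : ℕ) : Prop :=
  (r, c) ∈ skewCells lam mu ∧ (r + 1, c) ∈ skewCells lam mu ∧
    T.entry r c = v ∧ T.entry (r + 1) c = v + 1

def IsFree (r c : ℕ) : Prop :=
  (r, c) ∈ skewCells lam mu ∧ (T.entry r c = v ∨ T.entry r c = v + 1) ∧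
    ¬ T.IsPairedAt v r c ∧ ¬ (0 < r ∧ T.IsPairedAt v (r - 1) c)

instance (r c : ℕ) : Decidable (T.IsPairedAt v r c) := by
  unfold IsPairedAt; infer_instance

instance (r c : ℕ) : Decidable (T.IsFree v r c) := by
  unfold IsFree; infer_instance

def freeCols (r : ℕ) : Finset ℕ :=
  {c ∈ (skewCells lam mu).image Prod.snd | T.IsFree v r c}

def numFreeUpper (r : ℕ) : ℕ :=
  #{c ∈ T.freeCols v r | T.entry r c = v + 1}

def bkEntry (r c : ℕ) : ℕ :=
  if T.IsFree v r c then
    if #{c' ∈ T.freeCols v r | c' < c} < T.numFreeUpper v r then v else v + 1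
  else T.entry r c

variable {T v}

theorem mem_freeCols {r c : ℕ} : c ∈ T.freeCols v r ↔ T.IsFree v r c := by
  simp only [freeCols, mem_filter, mem_image, and_iff_right_iff_imp]
  exact fun h => ⟨(r, c), h.1, rfl⟩

theorem IsPairedAt.not_isFree {r c : ℕ} (h : T.IsPairedAt v r c) : ¬ T.IsFree v r c :=
  fun hf => hf.2.2.1 h

theorem IsPairedAt.not_isFree_succ {r c : ℕ} (h : T.IsPairedAt v r c) :
    ¬ T.IsFree v (r + 1) c :=
  fun hf => hf.2.2.2 ⟨r.succ_pos, h⟩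

theorem isPairedAt_of_not_isFree {r c : ℕ} (hm : (r, c) ∈ skewCells lam mu)
    (he : T.entry r c = v) (h : ¬ T.IsFree v r c) : T.IsPairedAt v r c := by
  by_contra hp
  refine h ⟨hm, Or.inl he, hp, fun ⟨hr, _, _, _, he'⟩ => ?_⟩
  rw [Nat.sub_add_cancel hr] at he'
  omega

theorem isPairedAt_pred_of_not_isFree {r c : ℕ} (hm : (r, c) ∈ skewCells lam mu)
    (he : T.entry r c = v + 1) (h : ¬ T.IsFree v r c) :
    0 < r ∧ T.IsPairedAt v (r - 1) c := by
  by_contra hp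
  exact h ⟨hm, Or.inr he, fun ⟨_, _, he', _⟩ => by omega, hp⟩

theorem IsPairedAt.of_succ_col {r c : ℕ} (h : T.IsPairedAt v r (c + 1))
    (hm : (r, c) ∈ skewCells lam mu) (he : T.entry r c = v) : T.IsPairedAt v r c := by
  obtain ⟨hm₁, hm₂, _, he₂⟩ := h
  have hm' : (r + 1, c) ∈ skewCells lam mu :=
    mem_skewCells_of_le_of_le hm hm₂ (by omega) le_rfl le_rfl (by omega)
  have := T.row_weak' _ _ _ (lt_add_one c) hm' hm₂
  have := T.col_strict' _ _ _ (lt_add_one r) hm hm'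
  exact ⟨hm, hm', he, by omega⟩

theorem IsPairedAt.succ_col {r c : ℕ} (h : T.IsPairedAt v r c)
    (hm : (r + 1, c + 1) ∈ skewCells lam mu) (he : T.entry (r + 1) (c + 1) = v + 1) :
    T.IsPairedAt v r (c + 1) := by
  obtain ⟨hm₁, _, he₁, _⟩ := h
  have hm' : (r, c + 1) ∈ skewCells lam mu :=
    mem_skewCells_of_le_of_le hm₁ hm le_rfl (by omega) (by omega) le_rfl
  have := T.row_weak' _ _ _ (lt_add_one c) hm₁ hm'
  have := T.col_strict' _ _ _ (lt_add_one r) hm' hm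
  exact ⟨hm', hm, by omega, he⟩

theorem IsFree.mem {r c : ℕ} (h : T.IsFree v r c) : (r, c) ∈ skewCells lam mu := h.1

theorem IsFree.entry {r c : ℕ} (h : T.IsFree v r c) :
    T.entry r c = v ∨ T.entry r c = v + 1 := h.2.1

theorem IsFree.add_two_le_entry_succ {r c : ℕ} (h : T.IsFree v r c)
    (hm : (r + 1, c) ∈ skewCells lam mu) : v + 2 ≤ T.entry (r + 1) c := by
  have := T.col_strict' _ _ _ (lt_add_one r) h.mem hm
  have := h.entry
  by_contra hlt
  exact h.2.2.1 ⟨h.mem, hm, by omega, by omega⟩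

theorem IsFree.entry_pred_lt {r c : ℕ} (h : T.IsFree v (r + 1) c)
    (hm : (r, c) ∈ skewCells lam mu) : T.entry r c < v := by
  have := T.col_strict' _ _ _ (lt_add_one r) hm h.mem
  have := h.entry
  by_contra hlt
  refine h.2.2.2 ⟨r.succ_pos, ?_⟩
  rw [Nat.add_sub_cancel]
  exact ⟨hm, h.mem, by omega, by omega⟩

theorem bkEntry_of_not_isFree {r c : ℕ} (h : ¬ T.IsFree v r c) :
    T.bkEntry v r c = T.entry r c := if_neg h

theorem bkEntry_of_isFree {r c : ℕ} (h : T.IsFree v r c) : T.bkEntry v r c =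
    if #{c' ∈ T.freeCols v r | c' < c} < T.numFreeUpper v r then v else v + 1 := if_pos h

theorem IsFree.bkEntry {r c : ℕ} (h : T.IsFree v r c) :
    T.bkEntry v r c = v ∨ T.bkEntry v r c = v + 1 := by
  rw [bkEntry_of_isFree h]; split_ifs <;> simp

theorem bkEntry_le_bkEntry_succ_col {r c : ℕ} (h₁ : (r, c) ∈ skewCells lam mu)
    (h₂ : (r, c + 1) ∈ skewCells lam mu) : T.bkEntry v r c ≤ T.bkEntry v r (c + 1) := by
  have hle := T.row_weak' _ _ _ (lt_add_one c) h₁ h₂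
  by_cases hx : T.IsFree v r c <;> by_cases hy : T.IsFree v r (c + 1)
  · have hrank : #{c' ∈ T.freeCols v r | c' < c} ≤ #{c' ∈ T.freeCols v r | c' < c + 1} :=
      card_le_card fun c' hc' => by
        rw [mem_filter] at hc' ⊢; exact ⟨hc'.1, by omega⟩
    rw [bkEntry_of_isFree hx, bkEntry_of_isFree hy]
    split_ifs <;> omega
  · rw [bkEntry_of_not_isFree hy]
    have := hx.bkEntry
    by_cases hv : T.entry r (c + 1) = v
    · have hxv : T.entry r c = v := by have := hx.entry; omega
      exact absurd ((isPairedAt_of_not_isFree h₂ hv hy).of_succ_col h₁ hxv) fun hp =>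
        hp.not_isFree hx
    · have := hx.entry; omega
  · rw [bkEntry_of_not_isFree hx]
    have := hy.bkEntry
    by_cases hv : T.entry r c = v + 1
    · have hyv : T.entry r (c + 1) = v + 1 := by have := hy.entry; omega
      obtain ⟨hr, hp⟩ := isPairedAt_pred_of_not_isFree h₁ hv hx
      obtain ⟨r, rfl⟩ : ∃ r', r = r' + 1 := ⟨r - 1, by omega⟩
      exact absurd (hp.succ_col h₂ hyv) fun hp' => hp'.not_isFree_succ hy
    · have := hy.entry; omega
  · rw [bkEntry_of_not_isFree hx, bkEntry_of_not_isFree hy]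
    exact hle

theorem bkEntry_lt_bkEntry_succ_row {r c : ℕ} (h₁ : (r, c) ∈ skewCells lam mu)
    (h₂ : (r + 1, c) ∈ skewCells lam mu) : T.bkEntry v r c < T.bkEntry v (r + 1) c := by
  by_cases hx : T.IsFree v r c
  · have hy := hx.add_two_le_entry_succ h₂
    have hy' : ¬ T.IsFree v (r + 1) c := fun h => by have := h.entry; omega
    rw [bkEntry_of_not_isFree hy']
    have := hx.bkEntry
    omega
  · rw [bkEntry_of_not_isFree hx]
    by_cases hy : T.IsFree v (r + 1) c
    · have := hy.entry_pred_lt h₁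
      have := hy.bkEntry
      omega
    · rw [bkEntry_of_not_isFree hy]
      exact T.col_strict' _ _ _ (lt_add_one r) h₁ h₂

variable (T v) in
def bk (hv : 0 < v) : SkewSSYT lam mu where
  entry := T.bkEntry v
  pos' r c hm := by
    by_cases h : T.IsFree v r c
    · have := h.bkEntry; omega
    · rw [bkEntry_of_not_isFree h]; exact T.pos' r c hm
  zeros' r c hm := by
    rw [bkEntry_of_not_isFree fun h => hm h.mem]; exact T.zeros' r c hm
  row_weak' := row_weak_of_le_succ fun _ _ => bkEntry_le_bkEntry_succ_col
  col_strict' := col_strict_of_lt_succ fun _ _ => bkEntry_lt_bkEntry_succ_row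

end SkewSSYT

namespace SkewSSYT

variable {T : SkewSSYT lam mu} {v : ℕ} {hv : 0 < v}

@[simp] theorem bk_entry : (T.bk v hv).entry = T.bkEntry v := rfl

theorem isPairedAt_bk_iff {r c : ℕ} : (T.bk v hv).IsPairedAt v r c ↔ T.IsPairedAt v r c := by
  constructor
  · rintro ⟨hm₁, hm₂, he₁, he₂⟩
    rw [bk_entry] at he₁ he₂
    by_cases hx : T.IsFree v r c
    · have hy := hx.add_two_le_entry_succ hm₂
      rw [bkEntry_of_not_isFree fun h => by have := h.entry; omega] at he₂
      omega
    · rw [bkEntry_of_not_isFree hx] at he₁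
      refine ⟨hm₁, hm₂, he₁, ?_⟩
      by_cases hy : T.IsFree v (r + 1) c
      · have := T.col_strict' _ _ _ (lt_add_one r) hm₁ hm₂
        have := hy.entry
        omega
      · rwa [bkEntry_of_not_isFree hy] at he₂
  · intro h
    refine ⟨h.1, h.2.1, ?_, ?_⟩
    · rw [bk_entry, bkEntry_of_not_isFree h.not_isFree, h.2.2.1]
    · rw [bk_entry, bkEntry_of_not_isFree h.not_isFree_succ, h.2.2.2]

theorem isFree_bk_iff {r c : ℕ} : (T.bk v hv).IsFree v r c ↔ T.IsFree v r c := by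
  by_cases hx : T.IsFree v r c
  · simp only [hx, iff_true]
    exact ⟨hx.mem, hx.bkEntry, by rw [isPairedAt_bk_iff]; exact hx.2.2.1,
      by rw [isPairedAt_bk_iff]; exact hx.2.2.2⟩
  · simp only [hx, iff_false]
    unfold IsFree
    rw [isPairedAt_bk_iff, isPairedAt_bk_iff, bk_entry, bkEntry_of_not_isFree hx]
    exact hx

theorem freeCols_bk {r : ℕ} : (T.bk v hv).freeCols v r = T.freeCols v r := by
  ext c
  rw [mem_freeCols, mem_freeCols, isFree_bk_iff]

variable (T v) in
theorem card_filter_entry_add_numFreeUpper (r : ℕ) :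
    #{c ∈ T.freeCols v r | T.entry r c = v} + T.numFreeUpper v r = #(T.freeCols v r) := by
  rw [numFreeUpper, ← card_filter_add_card_filter_not (s := T.freeCols v r)
    (fun c => T.entry r c = v)]
  congr 2
  refine filter_congr fun c hc => ?_
  have := (mem_freeCols.mp hc).entry
  omega

theorem card_filter_bkEntry_eq {r : ℕ} :
    #{c ∈ T.freeCols v r | T.bkEntry v r c = v} = T.numFreeUpper v r := by
  have hfilter : {c ∈ T.freeCols v r | T.bkEntry v r c = v}
      = {c ∈ T.freeCols v r | #{c' ∈ T.freeCols v r | c' < c} < T.numFreeUpper v r} :=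
    filter_congr fun c hc => by
      rw [bkEntry_of_isFree (mem_freeCols.mp hc)]
      split_ifs with h <;> simp [h]
  rw [hfilter, card_filter_card_filter_lt_lt]
  exact min_eq_left (card_filter_le _ _)

theorem numFreeUpper_bk {r : ℕ} :
    (T.bk v hv).numFreeUpper v r = #{c ∈ T.freeCols v r | T.entry r c = v} := by
  have h₁ := card_filter_entry_add_numFreeUpper (T.bk v hv) v r
  have h₂ := card_filter_entry_add_numFreeUpper T v r
  rw [freeCols_bk, bk_entry, card_filter_bkEntry_eq] at h₁
  omega

theorem bk_bk : (T.bk v hv).bk v hv = T := by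
  ext r c
  change (T.bk v hv).bkEntry v r c = T.entry r c
  by_cases hx : T.IsFree v r c
  · have hsorted : ∀ x ∈ T.freeCols v r, ∀ y ∈ T.freeCols v r,
        T.entry r x = v → ¬ T.entry r y = v → x < y := by
      intro x hx' y hy' hxv hyv
      have := (mem_freeCols.mp hy').entry
      by_contra hxy
      rcases (not_lt.mp hxy).lt_or_eq with hlt | rfl
      · have := T.row_weak' r y x hlt (mem_freeCols.mp hy').mem (mem_freeCols.mp hx').mem
        omega
      · exact hyv hxv
    rw [bkEntry_of_isFree (isFree_bk_iff.mpr hx), freeCols_bk, numFreeUpper_bk]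
    have := hx.entry
    split_ifs with h <;>
      rw [card_filter_lt_lt_card_filter_iff hsorted (mem_freeCols.mpr hx)] at h <;> omega
  · rw [bkEntry_of_not_isFree (mt isFree_bk_iff.mp hx), bk_entry, bkEntry_of_not_isFree hx]

variable (T v) in
theorem card_filter_isFree (Q : ℕ → ℕ → Prop) [∀ r c, Decidable (Q r c)] :
    #{p ∈ skewCells lam mu | Q p.1 p.2 ∧ T.IsFree v p.1 p.2}
      = ∑ r ∈ (skewCells lam mu).image Prod.fst, #{c ∈ T.freeCols v r | Q r c} := by
  rw [card_eq_sum_card_fiberwise fun p hp => mem_image_of_mem Prod.fst (mem_filter.mp hp).1]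
  refine sum_congr rfl fun r _ => card_nbij' Prod.snd (fun c => (r, c)) ?_ ?_ ?_ ?_
  · rintro ⟨r', c⟩ hp
    simp only [mem_coe, mem_filter] at hp ⊢
    obtain ⟨⟨_, hq, hf⟩, rfl⟩ := hp
    exact ⟨mem_freeCols.mpr hf, hq⟩
  · intro c hc
    simp only [mem_coe, mem_filter] at hc ⊢
    have hf := mem_freeCols.mp hc.1
    exact ⟨⟨hf.mem, hc.2, hf⟩, trivial⟩
  · rintro ⟨r', c⟩ hp
    simp only [mem_coe, mem_filter] at hp
    simp [hp.2]
  · intro c _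
    rfl

variable (T v) in
/-- Shifting down by one row matches the paired `v`s with the paired `v + 1`s. -/
theorem card_filter_entry_not_isFree :
    #{p ∈ skewCells lam mu | T.entry p.1 p.2 = v ∧ ¬ T.IsFree v p.1 p.2}
      = #{p ∈ skewCells lam mu | T.entry p.1 p.2 = v + 1 ∧ ¬ T.IsFree v p.1 p.2} := by
  refine card_nbij' (fun p => (p.1 + 1, p.2)) (fun p => (p.1 - 1, p.2)) ?_ ?_ ?_ ?_
  · rintro ⟨r, c⟩ hp
    simp only [mem_coe, mem_filter] at hp ⊢
    have h := isPairedAt_of_not_isFree hp.1 hp.2.1 hp.2.2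
    exact ⟨h.2.1, h.2.2.2, h.not_isFree_succ⟩
  · rintro ⟨r, c⟩ hp
    simp only [mem_coe, mem_filter] at hp ⊢
    obtain ⟨_, h⟩ := isPairedAt_pred_of_not_isFree hp.1 hp.2.1 hp.2.2
    exact ⟨h.1, h.2.2.1, h.not_isFree⟩
  · rintro ⟨r, c⟩ _
    simp
  · rintro ⟨r, c⟩ hp
    simp only [mem_coe, mem_filter] at hp
    have := (isPairedAt_pred_of_not_isFree hp.1 hp.2.1 hp.2.2).1
    simp only [Prod.mk.injEq, and_true]
    omega

theorem wt_bk_self : (T.bk v hv).wt v = T.wt (v + 1) := by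
  have hsplit : ∀ (U : SkewSSYT lam mu) (k : ℕ), U.wt k
      = #{p ∈ skewCells lam mu | U.entry p.1 p.2 = k ∧ T.IsFree v p.1 p.2}
        + #{p ∈ skewCells lam mu | U.entry p.1 p.2 = k ∧ ¬ T.IsFree v p.1 p.2} := by
    intro U k
    rw [wt, ← card_filter_add_card_filter_not fun p => T.IsFree v p.1 p.2, filter_filter,
      filter_filter]
  rw [hsplit, hsplit]
  congr 1
  · rw [bk_entry, card_filter_isFree T v fun r c => T.bkEntry v r c = v,
      card_filter_isFree T v fun r c => T.entry r c = v + 1]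
    exact sum_congr rfl fun r _ => card_filter_bkEntry_eq
  · rw [← card_filter_entry_not_isFree]
    congr 1
    exact filter_congr fun p _ => and_congr_left fun h => by
      rw [bk_entry, bkEntry_of_not_isFree h]

theorem wt_bk (k : ℕ) : (T.bk v hv).wt k = T.wt (Equiv.swap v (v + 1) k) := by
  rcases eq_or_ne k v with rfl | hkv
  · rw [Equiv.swap_apply_left, wt_bk_self]
  rcases eq_or_ne k (v + 1) with rfl | hkv'
  · rw [Equiv.swap_apply_right]
    conv_rhs => rw [← bk_bk (T := T) (hv := hv)]
    rw [wt_bk_self]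
  rw [Equiv.swap_apply_of_ne_of_ne hkv hkv', wt, wt]
  congr 1
  refine filter_congr fun p _ => ?_
  by_cases hx : T.IsFree v p.1 p.2
  · have := hx.bkEntry
    have := hx.entry
    simp only [bk_entry]
    omega
  · rw [bk_entry, bkEntry_of_not_isFree hx]

end SkewSSYT

open SkewSSYT in
theorem bk_mem_SSYTcontent {n : ℕ} {β : Fin (n + 1) → ℕ} {T : SkewSSYT lam mu}
    (hT : T ∈ SSYTcontent lam mu β) (i : Fin n) :
    T.bk ((i : ℕ) + 1) (Nat.succ_pos _) ∈ SSYTcontent lam mu (β ∘ Equiv.swap i.castSucc i.succ) := by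
  refine ⟨fun j => ?_, fun r c hm => ?_⟩
  · have hswap : Equiv.swap ((i : ℕ) + 1) ((i : ℕ) + 1 + 1) ((j : ℕ) + 1)
        = (Equiv.swap i.castSucc i.succ j : ℕ) + 1 := by
      simpa using ((add_left_injective 1).comp Fin.val_injective).map_swap
        i.castSucc i.succ j |>.symm
    rw [wt_bk, hswap]
    exact hT.1 _
  · by_cases hx : T.IsFree ((i : ℕ) + 1) r c
    · have := hx.bkEntry
      change T.bkEntry _ r c ≤ n + 1
      omega
    · exact (bkEntry_of_not_isFree hx).trans_le (hT.2 r c hm)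

open SkewSSYT in
theorem card_SSYTcontent_comp_swap {n : ℕ} (β : Fin (n + 1) → ℕ) (i : Fin n) :
    Nat.card (SSYTcontent lam mu (β ∘ Equiv.swap i.castSucc i.succ))
      = Nat.card (SSYTcontent lam mu β) := by
  have hβ : (β ∘ Equiv.swap i.castSucc i.succ) ∘ Equiv.swap i.castSucc i.succ = β :=
    funext fun j => by simp
  refine Nat.card_congr
    { toFun := fun T => ⟨T.1.bk _ (Nat.succ_pos _), by
        simpa only [hβ] using bk_mem_SSYTcontent T.2 i⟩
      invFun := fun T => ⟨T.1.bk _ (Nat.succ_pos _), bk_mem_SSYTcontent T.2 i⟩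
      left_inv := fun T => Subtype.ext (bk_bk (hv := Nat.succ_pos _))
      right_inv := fun T => Subtype.ext (bk_bk (hv := Nat.succ_pos _)) }

theorem card_SSYTcontent_comp_perm {n : ℕ} (β : Fin n → ℕ) (σ : Equiv.Perm (Fin n)) :
    Nat.card (SSYTcontent lam mu (β ∘ σ)) = Nat.card (SSYTcontent lam mu β) := by
  cases n with
  | zero => rw [Subsingleton.elim (β ∘ σ) β]
  | succ n =>
    have hσ : σ ∈ Submonoid.closure (Set.range fun i : Fin n => Equiv.swap i.castSucc i.succ) := by
      rw [Equiv.Perm.mclosure_swap_castSucc_succ]; trivial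
    induction hσ using Submonoid.closure_induction generalizing β with
    | mem σ hσ =>
      obtain ⟨i, rfl⟩ := hσ
      exact card_SSYTcontent_comp_swap β i
    | one => rfl
    | mul σ τ _ _ hσ hτ => rw [Equiv.Perm.coe_mul, ← Function.comp_assoc, hτ, hσ]

theorem cyc_eq_comp_addRight {n : ℕ} [NeZero n] (r : ℕ) (α : Fin n → ℕ) :
    cyc r α = α ∘ Equiv.addRight (Fin.ofNat n r) := by
  funext i
  simp only [cyc, Function.comp_apply, Equiv.coe_addRight]
  congr 1
  ext
  simp [Fin.val_add]

theorem card_SSYTcontent_cyc {n : ℕ} [NeZero n] (α : Fin n → ℕ) (r : ℕ) :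
    Nat.card (SSYTcontent lam mu (cyc r α)) = Nat.card (SSYTcontent lam mu α) := by
  rw [cyc_eq_comp_addRight, card_SSYTcontent_comp_perm]

theorem finite_SSYTbdd (lam mu : YoungDiagram) (n : ℕ) : (SSYTbdd lam mu n).Finite := by
  have hinj : Set.InjOn (fun (T : SkewSSYT lam mu) (p : skewCells lam mu) => T.entry p.1.1 p.1.2)
      (SSYTbdd lam mu n) := by
    intro T _ U _ h
    ext r c
    by_cases hm : (r, c) ∈ skewCells lam mu
    · exact congrFun h ⟨(r, c), hm⟩
    · rw [T.zeros' r c hm, U.zeros' r c hm]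
  refine Set.Finite.of_finite_image ((Set.Finite.pi fun _ => Set.finite_Iic n).subset ?_) hinj
  rintro _ ⟨T, hT, rfl⟩ p -
  exact hT p.1.1 p.1.2 p.2

theorem finite_SSYTcontent {n : ℕ} (β : Fin n → ℕ) : (SSYTcontent lam mu β).Finite :=
  (finite_SSYTbdd lam mu n).subset fun _ hT => hT.2

theorem zwt_add_mul_sum_modEq {n : ℕ} [NeZero n] (α : Fin n → ℕ) (r : ℕ) :
    zwt α r + r * ∑ i, α i ≡ zwt α 0 [MOD n] := by
  have hzwt : ∀ s : ℕ, (zwt α s : ZMod n) = ∑ i : Fin n, ((i : ℕ) + 1 - s : ZMod n) * α i := by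
    intro s
    rw [zwt, cyc_eq_comp_addRight]
    push_cast
    refine Fintype.sum_equiv (Equiv.addRight (Fin.ofNat n s)) _ _ fun j => ?_
    simp only [Function.comp_apply, Equiv.coe_addRight, Fin.val_add, Fin.val_ofNat,
      ZMod.natCast_mod, Nat.cast_add]
    ring
  rw [← ZMod.natCast_eq_natCast_iff]
  push_cast
  rw [hzwt, hzwt, mul_sum, ← sum_add_distrib]
  refine sum_congr rfl fun i _ => ?_
  push_cast
  ring

theorem eq_of_zwt_eq {n : ℕ} [NeZero n] {α : Fin n → ℕ} (hα : Nat.Coprime (∑ i, α i) n)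
    {r s : ℕ} (hr : r ∈ Icc 1 n) (hs : s ∈ Icc 1 n) (h : zwt α r = zwt α s) : r = s := by
  have hmul : r * ∑ i, α i ≡ s * ∑ i, α i [MOD n] :=
    Nat.ModEq.add_left_cancel' (zwt α r)
      ((zwt_add_mul_sum_modEq α r).trans (h ▸ zwt_add_mul_sum_modEq α s).symm)
  rw [mem_Icc] at hr hs
  obtain ⟨r, rfl⟩ : ∃ r', r = r' + 1 := ⟨r - 1, by omega⟩
  obtain ⟨s, rfl⟩ : ∃ s', s = s' + 1 := ⟨s - 1, by omega⟩
  have := ((Nat.ModEq.cancel_right_of_coprime hα.symm hmul).add_right_cancel' 1).eq_of_lt_of_lt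
    (by omega) (by omega)
  omega

theorem weightedSum_eq_zwt {n : ℕ} {α : Fin n → ℕ} {r : ℕ} {T : SkewSSYT lam mu}
    (hT : T ∈ SSYTcontent lam mu (cyc r α)) : weightedSum n T = zwt α r :=
  sum_congr rfl fun j _ => by rw [hT.1 j]

theorem pairwiseDisjoint_SSYTcontent_cyc {n : ℕ} [NeZero n] {α : Fin n → ℕ}
    (hα : Nat.Coprime (∑ i, α i) n) :
    (↑(Icc 1 n) : Set ℕ).PairwiseDisjoint fun r => SSYTcontent lam mu (cyc r α) :=
  fun _ hr _ hs hrs => Set.disjoint_left.mpr fun _ hTr hTs =>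
    hrs (eq_of_zwt_eq hα hr hs ((weightedSum_eq_zwt hTr).symm.trans (weightedSum_eq_zwt hTs)))

theorem finsum_mem_const {ι M : Type*} [AddCommMonoid M] {s : Set ι} (hs : s.Finite) (c : M) :
    ∑ᶠ _ ∈ s, c = Nat.card s • c := by
  rw [finsum_mem_eq_finite_toFinset_sum _ hs, sum_const, Nat.card_coe_set_eq,
    Set.ncard_eq_toFinset_card _ hs]

theorem finsum_mem_iUnion_SSYTcontent_cyc {M : Type*} [AddCommMonoid M] {n : ℕ} [NeZero n]
    {α : Fin n → ℕ} (hα : Nat.Coprime (∑ i, α i) n) (g : ℕ → M) :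
    ∑ᶠ T ∈ ⋃ r ∈ Icc 1 n, SSYTcontent lam mu (cyc r α), g (weightedSum n T)
      = ∑ r ∈ Icc 1 n, Nat.card (SSYTcontent lam mu α) • g (zwt α r) := by
  rw [← set_biUnion_coe, finsum_mem_biUnion (pairwiseDisjoint_SSYTcontent_cyc hα)
    (Icc 1 n).finite_toSet fun r _ => finite_SSYTcontent _, finsum_mem_coe_finset]
  refine sum_congr rfl fun r _ => ?_
  rw [finsum_mem_congr rfl fun T hT => by rw [weightedSum_eq_zwt hT],
    finsum_mem_const (finite_SSYTcontent _), card_SSYTcontent_cyc]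

theorem sum_Icc_pow_eq_zero {K : Type*} [Field K] {ζ : K} {n m : ℕ} {z : ℕ → ℕ} (hn : 0 < n)
    (hζn : ζ ^ n = 1) (hζm : ζ ^ m ≠ 1) (hz : ∀ r, z r + r * m ≡ z 0 [MOD n]) :
    ∑ r ∈ Icc 1 n, ζ ^ z r = 0 := by
  have hζ : ζ ≠ 0 := by
    rintro rfl
    simp [zero_pow hn.ne'] at hζn
  have hterm : ∀ r, ζ ^ z r = ζ ^ z 0 * (ζ ^ m)⁻¹ ^ r := fun r => by
    have hmod : ζ ^ (z r + r * m) = ζ ^ z 0 := by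
      rw [pow_eq_pow_mod _ hζn, (hz r : (z r + r * m) % n = z 0 % n), ← pow_eq_pow_mod _ hζn]
    rw [← hmod, pow_add, pow_mul', inv_pow,
      mul_inv_cancel_right₀ (pow_ne_zero _ (pow_ne_zero _ hζ))]
  have hw : (ζ ^ m)⁻¹ ^ n = 1 := by rw [inv_pow, ← pow_mul, mul_comm, pow_mul, hζn, one_pow, inv_one]
  rw [sum_congr rfl fun r _ => hterm r, ← mul_sum, ← Ico_add_one_right_eq_Icc,
    geom_sum_Ico (inv_ne_one.mpr hζm) (by omega), pow_succ, hw, one_mul, pow_one, sub_self,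
    zero_div, mul_zero]

theorem IsPrimitiveRoot.zpow_pow_ne_one {K : Type*} [Field K] {ξ : K} {n m : ℕ}
    (hξ : IsPrimitiveRoot ξ n) (hm : Nat.Coprime m n) {k : ℤ} (hk : ¬ (n : ℤ) ∣ k) :
    (ξ ^ k) ^ m ≠ 1 := by
  rw [← zpow_natCast, ← zpow_mul, Ne, hξ.zpow_eq_one_iff_dvd]
  exact fun h => hk ((Nat.isCoprime_iff_coprime.mpr hm.symm).dvd_of_dvd_mul_right h)

theorem csp_polynomial_root_values_general (lam mu : YoungDiagram)
    (n : ℕ) (hn : 0 < n) (α : Fin n → ℕ) (hα : ∑ i, α i = lam.card - mu.card)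
    (hgcd : Nat.gcd (lam.card - mu.card) n = 1)
    (Xset : Set (SkewSSYT lam mu))
    (hX : Xset = ⋃ r ∈ Finset.Icc 1 n, SSYTcontent lam mu (cyc r α))
    (f : ℂ → ℂ) (hf : ∀ q : ℂ, f q = ∑ᶠ T ∈ Xset, q ^ weightedSum n T)
    (ξ : ℂ) (hξ : IsPrimitiveRoot ξ n) :
    (∀ k : ℤ, ¬ (n : ℤ) ∣ k → f (ξ ^ k) = 0) ∧
    f 1 = (Nat.card ↥Xset : ℂ) ∧
    Nat.card ↥Xset = n * Nat.card ↥(SSYTcontent lam mu α) := by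
  have : NeZero n := ⟨hn.ne'⟩
  have hcop : Nat.Coprime (∑ i, α i) n := hα ▸ hgcd
  have hf' : ∀ q, f q = ∑ r ∈ Icc 1 n, Nat.card (SSYTcontent lam mu α) • q ^ zwt α r :=
    fun q => by rw [hf, hX, finsum_mem_iUnion_SSYTcontent_cyc hcop]
  have hcard : Nat.card Xset = n * Nat.card (SSYTcontent lam mu α) := by
    rw [Nat.card_coe_set_eq, ← finsum_one, hX, finsum_mem_iUnion_SSYTcontent_cyc hcop fun _ => 1]
    simp [mul_comm]
  refine ⟨fun k hk => ?_, ?_, hcard⟩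
  · have hζn : (ξ ^ k) ^ n = 1 := by
      rw [← zpow_natCast, ← zpow_mul, mul_comm, zpow_mul, zpow_natCast, hξ.pow_eq_one, one_zpow]
    rw [hf', ← smul_sum, sum_Icc_pow_eq_zero hn hζn (hξ.zpow_pow_ne_one hcop hk)
      (zwt_add_mul_sum_modEq α), smul_zero]
  · simp [hf', hcard]

/-- For `X = ⋃_{r=1}^n SSYT(λ/μ, cyc_r α)` and `f(q) = Σ_{T ∈ X} q^{Σ_j j⋅w_j(T)}`:
if `gcd(|λ/μ|, n) = 1` then `f` vanishes at all powers `ξ^k` (`n ∤ k`) of a primitive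
`n`-th root of unity `ξ`, and `f(1) = |X| = n ⋅ |SSYT(λ/μ, α)|`. -/
theorem csp_polynomial_root_values (lam mu : YoungDiagram) (hsub : mu ≤ lam)
    (n : ℕ) (hn : 0 < n) (α : Fin n → ℕ) (hα : ∑ i, α i = lam.card - mu.card)
    (hgcd : Nat.gcd (lam.card - mu.card) n = 1)
    (Xset : Set (SkewSSYT lam mu))
    (hX : Xset = ⋃ r ∈ Finset.Icc 1 n, SSYTcontent lam mu (cyc r α))
    (f : ℂ → ℂ) (hf : ∀ q : ℂ, f q = ∑ᶠ T ∈ Xset, q ^ weightedSum n T)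
    (ξ : ℂ) (hξ : IsPrimitiveRoot ξ n) :
    (∀ k : ℤ, ¬ (n : ℤ) ∣ k → f (ξ ^ k) = 0) ∧
    f 1 = (Nat.card ↥Xset : ℂ) ∧
    Nat.card ↥Xset = n * Nat.card ↥(SSYTcontent lam mu α) :=
  csp_polynomial_root_values_general lam mu n hn α hα hgcd Xset hX f hf ξ hξ
end
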